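/- If a system of k arithmetic progressions with pairwise distinct common differences n_1 < n_2 < ... < n_k covers ℤ (every integer lies in at least one progression) and k ≥ 2, then ∑ 1/n_i > 1. -/

import Mathlib

/-- Arithmetic progression in ℤ with offset `a` and difference `n`. -/
def AP (a n : ℤ) : Set ℤ := {x : ℤ | ∃ m : ℤ, x = a + m * n}

/-!
Suppose `∑ 1 / nᵢ ≤ 1` and let `N = ∏ nᵢ`. The progressions meet `[0, N)` in sets of sizes
`N / nᵢ` which cover it, so by counting they partition it. Let `ζ` be a primitive root of unity
whose order is the largest modulus `n`; it is at least `2` as the moduli are distinct. Then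
`∑_{x < N} ζ ^ x = 0`. Split along the partition: the class of a modulus `m < n` contributes `0`,
since its sum is unchanged when multiplied by `ζ ^ m ≠ 1` (shifting a class by `m` permutes it
modulo `N`), whereas the class of modulus `n` contributes `(N / n) • ζ ^ a ≠ 0`.
-/

open Finset

lemma mem_AP_iff_modEq {a n x : ℤ} : x ∈ AP a n ↔ x ≡ a [ZMOD n] := by
  simp only [AP, Set.mem_ofPred_eq, Int.modEq_iff_dvd, dvd_iff_exists_eq_mul_left]
  constructor <;> rintro ⟨m, hm⟩ <;> exact ⟨-m, by linarith⟩

lemma add_mem_AP_iff {a n m x : ℤ} (h : n ∣ m) : x + m ∈ AP a n ↔ x ∈ AP a n := by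
  have hx : x + m ≡ x [ZMOD n] := by simpa using (Int.modEq_zero_iff_dvd.2 h).add_left x
  simp only [mem_AP_iff_modEq]
  exact ⟨hx.symm.trans, hx.trans⟩

instance (a n x : ℤ) : Decidable (x ∈ AP a n) := decidable_of_iff _ mem_AP_iff_modEq.symm

def apBelow (N : ℕ) (a n : ℤ) : Finset ℕ :=
  (range N).filter fun x : ℕ => (x : ℤ) ∈ AP a n

lemma card_apBelow (a : ℤ) {n N : ℕ} (hn : 0 < n) (hN : n ∣ N) :
    #(apBelow N a n) = N / n := by
  have hmem : ∀ x : ℕ, (x : ℤ) ∈ AP a n ↔ x ≡ (a % n).toNat [MOD n] := fun x => by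
    rw [mem_AP_iff_modEq, ← Int.natCast_modEq_iff,
      Int.toNat_of_nonneg (Int.emod_nonneg _ (by omega))]
    exact ⟨fun h => h.trans (Int.mod_modEq a n).symm, fun h => h.trans (Int.mod_modEq a n)⟩
  simp_rw [apBelow, hmem, ← Nat.count_eq_card_filter_range, Nat.count_modEq_card _ hn,
    Nat.mod_eq_zero_of_dvd hN]
  simp

lemma Function.Periodic.sum_range_add {M : Type*} [AddCancelCommMonoid M] {f : ℕ → M} {N : ℕ}
    (hf : Function.Periodic f N) (n : ℕ) :
    ∑ x ∈ range N, f (x + n) = ∑ x ∈ range N, f x := by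
  induction n with
  | zero => simp
  | succ n ih =>
    have hrot := (sum_range_succ' (fun x => f (x + n)) N).symm.trans (sum_range_succ _ N)
    rw [show f (N + n) = f (0 + n) by rw [zero_add, add_comm, hf]] at hrot
    simpa only [add_right_comm _ 1 n, add_assoc, ih] using add_right_cancel hrot

lemma Finset.pairwiseDisjoint_of_sum_card_le_card_biUnion {ι α : Type*} [DecidableEq ι]
    [DecidableEq α] {s : Finset ι} {t : ι → Finset α}
    (h : ∑ i ∈ s, #(t i) ≤ #(s.biUnion t)) : (s : Set ι).PairwiseDisjoint t := by
  induction s using Finset.induction_on with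
  | empty => simp
  | insert i s hi ih =>
    rw [sum_insert hi, biUnion_insert] at h
    have hunion := card_union_le (t i) (s.biUnion t)
    have hs := card_biUnion_le (s := s) (t := t)
    rw [coe_insert, Set.pairwiseDisjoint_insert_of_notMem (by simpa)]
    refine ⟨ih (by omega), fun j hj => ?_⟩
    have hdisj := card_union_eq_card_add_card.1 (by omega : #(t i ∪ s.biUnion t) = _)
    exact hdisj.mono_right (subset_biUnion_of_mem t hj)

lemma sum_nat_div_le_of_sum_inv_le_one {ι : Type*} (s : Finset ι) (n : ι → ℕ) (N : ℕ)
    (h : ∑ i ∈ s, (1 : ℚ) / n i ≤ 1) : ∑ i ∈ s, N / n i ≤ N := by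
  have hQ : ((∑ i ∈ s, N / n i : ℕ) : ℚ) ≤ N :=
    calc ((∑ i ∈ s, N / n i : ℕ) : ℚ) ≤ ∑ i ∈ s, (N : ℚ) / n i := by
          push_cast; exact sum_le_sum fun i _ => Nat.cast_div_le
      _ = N * ∑ i ∈ s, (1 : ℚ) / n i := by simp_rw [mul_sum, mul_one_div]
      _ ≤ N := mul_le_of_le_one_right N.cast_nonneg h
  exact_mod_cast hQ

lemma sum_range_eq_zero_of_add_eq_mul {R : Type*} [CommRing R] [IsDomain R] {f : ℕ → R}
    {N n : ℕ} {w : R} (hf : Function.Periodic f N) (hshift : ∀ x, f (x + n) = w * f x)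
    (hw : w ≠ 1) : ∑ x ∈ range N, f x = 0 := by
  have h := hf.sum_range_add n
  simp only [hshift, ← mul_sum] at h
  exact (mul_left_eq_self₀.1 h).resolve_left hw

section RootOfUnitySums

variable {K : Type*} [Field K] {ζ : K} {N n : ℕ}

lemma sum_apBelow_pow_eq_zero (a : ℤ) (hN : n ∣ N) (hζN : ζ ^ N = 1) (hζn : ζ ^ n ≠ 1) :
    ∑ x ∈ apBelow N a n, ζ ^ x = 0 := by
  rw [apBelow, sum_filter]
  refine sum_range_eq_zero_of_add_eq_mul (n := n) (w := ζ ^ n) (fun x => ?_) (fun x => ?_) hζn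
  · simp [add_mem_AP_iff (Int.natCast_dvd_natCast.2 hN), pow_add, hζN]
  · simp [add_mem_AP_iff dvd_rfl, pow_add, mul_comm]

lemma sum_apBelow_pow_ne_zero [CharZero K] (a : ℤ) (hN : n ∣ N) (hNpos : 0 < N)
    (hζn : ζ ^ n = 1) : ∑ x ∈ apBelow N a n, ζ ^ x ≠ 0 := by
  have hn : 0 < n := Nat.pos_of_dvd_of_pos hN hNpos
  have hζ : ζ ≠ 0 := by rintro rfl; simp [hn.ne'] at hζn
  have hconst : ∀ x ∈ apBelow N a n, ζ ^ x = ζ ^ a := fun x hx => by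
    obtain ⟨m, hm⟩ := (mem_filter.1 hx).2
    rw [← zpow_natCast, hm, zpow_add₀ hζ, mul_comm m, zpow_mul, zpow_natCast, hζn, one_zpow,
      mul_one]
  rw [sum_congr rfl hconst, sum_const, card_apBelow a hn hN, nsmul_eq_mul]
  exact mul_ne_zero (Nat.cast_ne_zero.2 (Nat.div_pos (Nat.le_of_dvd hNpos hN) hn).ne')
    (zpow_ne_zero a hζ)

end RootOfUnitySums

theorem exists_ne_le_of_partition_range_apBelow {ι : Type*} [Fintype ι] {a : ι → ℤ}
    {n : ι → ℕ} {N : ℕ} (hN : ∀ i, n i ∣ N) (hNpos : 0 < N)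
    (hcover : univ.biUnion (fun i => apBelow N (a i) (n i)) = range N)
    (hdisj : ((univ : Finset ι) : Set ι).PairwiseDisjoint fun i => apBelow N (a i) (n i))
    {i₀ : ι} (hi₀ : 2 ≤ n i₀) : ∃ i ≠ i₀, n i₀ ≤ n i := by
  by_contra! hlt
  have hζ := Complex.isPrimitiveRoot_exp (n i₀) (by omega)
  set ζ := Complex.exp (2 * Real.pi * Complex.I / n i₀)
  have hζN : ζ ^ N = 1 := (hζ.pow_eq_one_iff_dvd N).2 (hN i₀)
  have htotal : ∑ x ∈ range N, ζ ^ x = 0 := by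
    rw [geom_sum_eq (hζ.ne_one (by omega)), hζN, sub_self, zero_div]
  rw [← hcover, sum_biUnion hdisj, sum_eq_single i₀ (fun i _ hi =>
    sum_apBelow_pow_eq_zero _ (hN i) hζN
      (hζ.pow_ne_one_of_pos_of_lt (Nat.pos_of_dvd_of_pos (hN i) hNpos).ne' (hlt i hi)))
    (by simp)] at htotal
  exact sum_apBelow_pow_ne_zero _ (hN i₀) hNpos hζ.pow_eq_one htotal

theorem erdos_covering_sum_gt_one (k : ℕ) (hk : 2 ≤ k) (a n : Fin k → ℤ)
    (hn : ∀ i, 1 ≤ n i)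
    (hdist : ∀ i j, i ≠ j → n i ≠ n j)
    (hcover : (⋃ i, AP (a i) (n i)) = Set.univ) :
    1 < ∑ i, (1 : ℚ) / (n i : ℚ) := by
  lift n to Fin k → ℕ using fun i => by linarith [hn i]
  beta_reduce at hn hdist hcover ⊢
  have hnpos : ∀ i, 0 < n i := fun i => by have := hn i; omega
  by_contra! hle
  push_cast at hle
  set N := ∏ i, n i
  have hN : ∀ i, n i ∣ N := fun i => dvd_prod_of_mem n (mem_univ i)
  have hrange : univ.biUnion (fun i => apBelow N (a i) (n i)) = range N := by
    ext x
    simpa [apBelow] using fun _ => Set.mem_iUnion.1 (hcover ▸ Set.mem_univ (x : ℤ))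
  have hcard :
      ∑ i, #(apBelow N (a i) (n i)) ≤ #(univ.biUnion fun i => apBelow N (a i) (n i)) := by
    simpa only [hrange, card_range, card_apBelow _ (hnpos _) (hN _)]
      using sum_nat_div_le_of_sum_inv_le_one univ n N hle
  obtain ⟨i₀, -, hmax⟩ := exists_max_image univ n ⟨⟨0, by omega⟩, mem_univ _⟩
  obtain ⟨j, hj⟩ := Fintype.exists_ne_of_one_lt_card (by rw [Fintype.card_fin]; omega) i₀
  have hnj : n j ≠ n i₀ := by exact_mod_cast hdist j i₀ hj
  have hi₀ : 2 ≤ n i₀ := by have := hnpos j; have := hmax j (mem_univ j); omega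
  obtain ⟨i, hi, hle'⟩ := exists_ne_le_of_partition_range_apBelow hN
    (prod_pos fun i _ => hnpos i) hrange (pairwiseDisjoint_of_sum_card_le_card_biUnion hcard) hi₀
  exact hdist i i₀ hi (by exact_mod_cast (hmax i (mem_univ i)).antisymm hle')
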